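/- There is no 3-phase s₁ × ⋯ × s_r Golay array triad when ∏_{k=1}^{r} s_k ≡ 4 (mod 6). -/

import Mathlib

open scoped BigOperators

/-- `ω = e^{2πi/3}`, a primitive cube root of unity. -/
noncomputable def ω : ℂ := Complex.exp (2 * Real.pi * Complex.I / 3)

/-- Aperiodic autocorrelation function of an `r`-dimensional array:
`C_A(u) = Σ_{i ∈ ℤ^r} A(i) conj(A(i+u))`. -/
noncomputable def aperCorrArr {r : ℕ} (A : (Fin r → ℤ) → ℂ) (u : Fin r → ℤ) : ℂ :=
  ∑' i : Fin r → ℤ, A i * (starRingEnd ℂ) (A (i + u))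

/-- A 3-phase `s₁ × ⋯ × s_r` array: vanishes whenever some index is out of
range, and its entries inside the index range lie in `{1, ω, ω²}`. -/
def IsThreePhaseArr (r : ℕ) (s : Fin r → ℕ) (A : (Fin r → ℤ) → ℂ) : Prop :=
  (∀ i : Fin r → ℤ, (∃ k, i k < 0 ∨ (s k : ℤ) ≤ i k) → A i = 0) ∧
    ∀ i : Fin r → ℤ, (∀ k, 0 ≤ i k ∧ i k < (s k : ℤ)) →
      A i ∈ ({1, ω, ω ^ 2} : Set ℂ)

/-- Three 3-phase `s₁ × ⋯ × s_r` arrays forming a 3-phase Golay array triad. -/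
def GolayArrTriad (r : ℕ) (s : Fin r → ℕ) (A B C : (Fin r → ℤ) → ℂ) : Prop :=
  IsThreePhaseArr r s A ∧ IsThreePhaseArr r s B ∧ IsThreePhaseArr r s C ∧
    ∀ u : Fin r → ℤ, u ≠ 0 →
      aperCorrArr A u + aperCorrArr B u + aperCorrArr C u = 0

/-!
Choose an axis `k` with `s_k` even (possible since `n = ∏ s_k` is even) and, for `j ∈ ℤ`, evaluate
the generating polynomials of the three arrays at `x_k = -ω^j` and `x_m = 1` for `m ≠ k`. The Golay
condition makes the squared moduli of the three values add up to `3n`. Each value is a signed sum of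
cube roots of unity whose signs sum to `0`, hence is divisible by `λ = 1 - ω` in `ℤ[ω]`; since
`N(λ) = 3`, its squared modulus is `3N` with `N ≡ (jM + δ)² (mod 3)`, where `δ` depends only on the
array and `M = Σ_i (-1)^{i_k} i_k = -n/2 ≡ 1 (mod 3)`. Hence
`(j + δ_A)² + (j + δ_B)² + (j + δ_C)² ≡ n ≡ 1 (mod 3)` for every `j`, which is impossible.
-/

open Finset ComplexConjugate
open scoped Pointwise

lemma isPrimitiveRoot_omega : IsPrimitiveRoot ω 3 := by
  simpa [ω] using Complex.isPrimitiveRoot_exp 3 (by norm_num)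

lemma omega_pow_three : ω ^ 3 = 1 := isPrimitiveRoot_omega.pow_eq_one

lemma omega_ne_zero : ω ≠ 0 := isPrimitiveRoot_omega.ne_zero (by norm_num)

lemma omega_sq_add_omega_add_one : ω ^ 2 + ω + 1 = 0 := by
  have h := isPrimitiveRoot_omega.geom_sum_eq_zero (by norm_num)
  rw [Finset.sum_range_succ, Finset.sum_range_succ, Finset.sum_range_one] at h
  linear_combination h

lemma norm_omega : ‖ω‖ = 1 := Complex.norm_eq_one_of_pow_eq_one omega_pow_three (by norm_num)

lemma conj_omega : conj ω = ω ^ 2 := by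
  rw [← Complex.inv_eq_conj norm_omega, inv_eq_of_mul_eq_one_left]
  rw [← pow_succ, omega_pow_three]

lemma one_sub_omega_mul_conj : (1 - ω) * conj (1 - ω) = 3 := by
  rw [map_sub, map_one, conj_omega]
  linear_combination omega_pow_three - omega_sq_add_omega_add_one

lemma one_sub_omega_add_conj : (1 - ω) + conj (1 - ω) = 3 := by
  rw [map_sub, map_one, conj_omega]
  linear_combination -omega_sq_add_omega_add_one

lemma exists_omega_zpow_eq (c : ℤ) :
    ∃ d q : ℤ, (d : ZMod 3) = c ∧ ω ^ c = 1 - d * (1 - ω) + q * (1 - ω) ^ 2 := by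
  have hc : ω ^ c = ω ^ (c % 3) := by
    conv_lhs => rw [← Int.emod_add_mul_ediv c 3]
    rw [zpow_add₀ omega_ne_zero, zpow_mul, zpow_ofNat, omega_pow_three, one_zpow, mul_one]
  have hd : ((c % 3 : ℤ) : ZMod 3) = c := ZMod.intCast_mod c 3
  obtain h | h | h : c % 3 = 0 ∨ c % 3 = 1 ∨ c % 3 = 2 := by omega
  all_goals rw [h] at hc hd
  · exact ⟨0, 0, hd, by simp [hc]⟩
  · exact ⟨1, 0, hd, by simp [hc]⟩
  · refine ⟨2, 1, hd, ?_⟩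
    rw [hc, zpow_ofNat]
    ring

lemma mul_conj_one_sub_omega_mul (d q : ℤ) :
    (1 - ω) * (q * (1 - ω) - d) * conj ((1 - ω) * (q * (1 - ω) - d)) =
      3 * ((d ^ 2 - 3 * d * q + 3 * q ^ 2 : ℤ) : ℂ) := by
  have hmul := one_sub_omega_mul_conj
  have hadd := one_sub_omega_add_conj
  generalize 1 - ω = l at hmul hadd ⊢
  simp only [map_mul, map_sub, map_intCast]
  push_cast
  linear_combination (q ^ 2 * l * conj l - q * d * (l + conj l) + d ^ 2 + 3 * q ^ 2) * hmul -
    3 * q * d * hadd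

theorem exists_sum_mul_conj_eq_three_mul {ι : Type*} (S : Finset ι) (σ c : ι → ℤ)
    (hσ : ∑ i ∈ S, σ i = 0) :
    ∃ N : ℤ, (∑ i ∈ S, σ i * ω ^ c i) * conj (∑ i ∈ S, σ i * ω ^ c i) = 3 * N ∧
      (N : ZMod 3) = ((∑ i ∈ S, σ i * c i : ℤ) : ZMod 3) ^ 2 := by
  choose d q hd hω using exists_omega_zpow_eq
  set D := ∑ i ∈ S, σ i * d (c i)
  set Q := ∑ i ∈ S, σ i * q (c i)
  have hT : ∑ i ∈ S, σ i * ω ^ c i = (1 - ω) * (Q * (1 - ω) - D) := by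
    have hσ' : ∑ i ∈ S, (σ i : ℂ) = 0 := by exact_mod_cast hσ
    have hterm : ∀ i ∈ S, σ i * ω ^ c i =
        σ i + (1 - ω) * ((σ i * q (c i) : ℤ) * (1 - ω) - (σ i * d (c i) : ℤ)) := by
      intro i _
      rw [hω]
      push_cast
      ring
    rw [sum_congr rfl hterm, sum_add_distrib, hσ', zero_add, ← mul_sum, sum_sub_distrib,
      ← sum_mul]
    push_cast [D, Q]
    rfl
  refine ⟨D ^ 2 - 3 * D * Q + 3 * Q ^ 2, by rw [hT, mul_conj_one_sub_omega_mul], ?_⟩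
  have h3 : (3 : ZMod 3) = 0 := rfl
  push_cast [D, h3, hd]
  ring

lemma aperCorrArr_eq_sum {r : ℕ} {S : Finset (Fin r → ℤ)} {A : (Fin r → ℤ) → ℂ}
    (hA : ∀ i ∉ S, A i = 0) (u : Fin r → ℤ) :
    aperCorrArr A u = ∑ i ∈ S, A i * conj (A (i + u)) :=
  tsum_eq_sum fun i hi => by rw [hA i hi, zero_mul]

lemma sum_sub_conj_mul_aperCorrArr {r : ℕ} {S : Finset (Fin r → ℤ)} {A : (Fin r → ℤ) → ℂ}
    (hA : ∀ i ∉ S, A i = 0) {χ : (Fin r → ℤ) → ℂ} (hχ_add : ∀ i u, χ (i + u) = χ i * χ u)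
    (hχ_norm : ∀ i, ‖χ i‖ = 1) :
    ∑ u ∈ S - S, conj (χ u) * aperCorrArr A u =
      (∑ i ∈ S, χ i * A i) * conj (∑ i ∈ S, χ i * A i) := by
  have hconj : ∀ i u, conj (χ u) = χ i * conj (χ (i + u)) := by
    intro i u
    rw [hχ_add, map_mul, ← mul_assoc, Complex.mul_conj', hχ_norm, Complex.ofReal_one, one_pow,
      one_mul]
  have hshift : ∀ i ∈ S, ∑ u ∈ S - S, conj (χ u) * (A i * conj (A (i + u))) =
      χ i * A i * ∑ x ∈ S, conj (χ x * A x) := by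
    intro i hi
    have hterm : ∀ u, conj (χ u) * (A i * conj (A (i + u))) =
        χ i * A i * conj (χ (i + u) * A (i + u)) := by
      intro u
      rw [hconj i u, map_mul]
      ring
    simp_rw [hterm, ← mul_sum]
    congr 1
    calc ∑ u ∈ S - S, conj (χ (i + u) * A (i + u))
        _ = ∑ x ∈ (S - S).map (addLeftEmbedding i), conj (χ x * A x) := by
          rw [sum_map]; rfl
        _ = ∑ x ∈ S, conj (χ x * A x) := by
          refine (sum_subset (fun x hx => mem_map.2 ⟨x - i, sub_mem_sub hx hi, by simp⟩) ?_).symm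
          intro x _ hx
          rw [hA x hx, mul_zero, map_zero]
  simp_rw [aperCorrArr_eq_sum hA, mul_sum]
  rw [sum_comm, sum_congr rfl hshift, map_sum, ← sum_mul]

lemma sum_Ico_two_mul_eq_zero {M : Type*} [AddCommMonoid M] (f : ℤ → M)
    (hf : ∀ y, f (2 * y) + f (2 * y + 1) = 0) (t : ℕ) :
    ∑ x ∈ Ico 0 (2 * t : ℤ), f x = 0 := by
  induction t with
  | zero => simp
  | succ t ih =>
    have h0 : (0 : ℤ) ≤ 2 * t := by positivity
    rw [show (2 * (t + 1 : ℕ) : ℤ) = 2 * t + 1 + 1 by push_cast; ring,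
      ← insert_Ico_right_eq_Ico_add_one (by omega), ← insert_Ico_right_eq_Ico_add_one h0,
      sum_insert (by simp), sum_insert (by simp), ih, add_zero, add_comm]
    exact hf t

lemma sum_piFinset_apply_eq_zero {ι κ R : Type*} [Fintype ι] [DecidableEq ι] [CommSemiring R]
    (t : ι → Finset κ) (k : ι) (f : κ → R) (hf : ∑ a ∈ t k, f a = 0) :
    ∑ x ∈ Fintype.piFinset t, f (x k) = 0 := by
  have h := prod_univ_sum t fun m a => if m = k then f a else 1
  simp only [Fintype.prod_ite_eq'] at h
  rw [← h]
  exact prod_eq_zero (mem_univ k) (by simpa using hf)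

noncomputable def arrBox {r : ℕ} (s : Fin r → ℕ) : Finset (Fin r → ℤ) :=
  Fintype.piFinset fun m => Ico 0 (s m : ℤ)

lemma mem_arrBox {r : ℕ} {s : Fin r → ℕ} {i : Fin r → ℤ} :
    i ∈ arrBox s ↔ ∀ m, 0 ≤ i m ∧ i m < s m := by
  simp [arrBox]

lemma card_arrBox {r : ℕ} (s : Fin r → ℕ) : #(arrBox s) = ∏ m, s m := by
  simp [arrBox]

lemma sum_arrBox_apply_eq_zero {r : ℕ} {s : Fin r → ℕ} {k : Fin r} (hk : Even (s k))
    {R : Type*} [CommSemiring R] (f : ℤ → R) (hf : ∀ y, f (2 * y) + f (2 * y + 1) = 0) :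
    ∑ i ∈ arrBox s, f (i k) = 0 := by
  obtain ⟨t, ht⟩ := hk
  refine sum_piFinset_apply_eq_zero _ k f ?_
  rw [ht, ← two_mul, Nat.cast_mul, Nat.cast_two]
  exact sum_Ico_two_mul_eq_zero f hf t

lemma sum_arrBox_negOnePow {r : ℕ} {s : Fin r → ℕ} {k : Fin r} (hk : Even (s k)) :
    ∑ i ∈ arrBox s, ((i k).negOnePow : ℤ) = 0 :=
  sum_arrBox_apply_eq_zero hk (fun x => (x.negOnePow : ℤ)) fun y => by
    rw [Int.negOnePow_two_mul, Int.negOnePow_two_mul_add_one]; rfl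

lemma two_mul_sum_arrBox_negOnePow_mul_add_prod {r : ℕ} {s : Fin r → ℕ} {k : Fin r}
    (hk : Even (s k)) :
    2 * ∑ i ∈ arrBox s, ((i k).negOnePow : ℤ) * i k + (∏ m, s m : ℕ) = 0 := by
  have h := sum_arrBox_apply_eq_zero hk (fun x => 2 * (x.negOnePow : ℤ) * x + 1) fun y => by
    rw [Int.negOnePow_two_mul, Int.negOnePow_two_mul_add_one]; push_cast; ring
  rw [sum_add_distrib, sum_const, card_arrBox, Nat.smul_one_eq_cast] at h
  simp only [mul_assoc] at h
  rwa [mul_sum]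

-- The generating polynomial `Σ_i A(i) x^i` of `A` evaluated at `x_k = z` and `x_m = 1` for `m ≠ k`.
noncomputable def axisEval {r : ℕ} (s : Fin r → ℕ) (k : Fin r) (z : ℂ)
    (A : (Fin r → ℤ) → ℂ) : ℂ :=
  ∑ i ∈ arrBox s, z ^ (i k) * A i

namespace IsThreePhaseArr

variable {r : ℕ} {s : Fin r → ℕ} {A : (Fin r → ℤ) → ℂ}

lemma eq_zero_of_notMem (hA : IsThreePhaseArr r s A) {i : Fin r → ℤ} (hi : i ∉ arrBox s) :
    A i = 0 := by
  simp only [mem_arrBox, not_forall] at hi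
  obtain ⟨m, hm⟩ := hi
  exact hA.1 i ⟨m, by omega⟩

lemma exists_eq_omega_zpow (hA : IsThreePhaseArr r s A) {i : Fin r → ℤ} (hi : i ∈ arrBox s) :
    ∃ e : ℤ, A i = ω ^ e := by
  obtain h | h | h : A i = 1 ∨ A i = ω ∨ A i = ω ^ 2 := hA.2 i (mem_arrBox.1 hi)
  exacts [⟨0, by simp [h]⟩, ⟨1, by simp [h]⟩, ⟨2, by simp [h]⟩]

lemma aperCorrArr_zero (hA : IsThreePhaseArr r s A) : aperCorrArr A 0 = ∏ m, s m := by
  rw [aperCorrArr_eq_sum fun i hi => hA.eq_zero_of_notMem hi]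
  have hterm : ∀ i ∈ arrBox s, A i * conj (A (i + 0)) = 1 := by
    intro i hi
    obtain ⟨e, he⟩ := hA.exists_eq_omega_zpow hi
    rw [add_zero, Complex.mul_conj', he, norm_zpow, norm_omega]
    simp
  rw [sum_congr rfl hterm, sum_const, card_arrBox]
  simp

lemma exists_axisEval_mul_conj (hA : IsThreePhaseArr r s A) {k : Fin r} (hk : Even (s k)) :
    ∃ δ : ZMod 3, ∀ j : ℤ, ∃ N : ℤ,
      axisEval s k (-ω ^ j) A * conj (axisEval s k (-ω ^ j) A) = 3 * N ∧
      (N : ZMod 3) =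
        (j * ((∑ i ∈ arrBox s, ((i k).negOnePow : ℤ) * i k : ℤ) : ZMod 3) + δ) ^ 2 := by
  choose! e he using fun i (hi : i ∈ arrBox s) => hA.exists_eq_omega_zpow hi
  refine ⟨((∑ i ∈ arrBox s, ((i k).negOnePow : ℤ) * e i : ℤ) : ZMod 3), fun j => ?_⟩
  have heval : axisEval s k (-ω ^ j) A =
      ∑ i ∈ arrBox s, ((i k).negOnePow : ℤ) * ω ^ (j * i k + e i) := by
    refine sum_congr rfl fun i hi => ?_
    rw [he i hi, neg_eq_neg_one_mul, mul_zpow, ← zpow_mul, Int.cast_negOnePow, mul_assoc,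
      ← zpow_add₀ omega_ne_zero]
  obtain ⟨N, hN, hN3⟩ := exists_sum_mul_conj_eq_three_mul (arrBox s)
    (fun i => ((i k).negOnePow : ℤ)) (fun i => j * i k + e i) (sum_arrBox_negOnePow hk)
  refine ⟨N, heval ▸ hN, ?_⟩
  have hsplit : ∑ i ∈ arrBox s, ((i k).negOnePow : ℤ) * (j * i k + e i) =
      j * ∑ i ∈ arrBox s, ((i k).negOnePow : ℤ) * i k +
        ∑ i ∈ arrBox s, ((i k).negOnePow : ℤ) * e i := by
    rw [mul_sum, ← sum_add_distrib]
    exact sum_congr rfl fun i _ => by ring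
  rw [hN3, hsplit]
  push_cast
  rfl

end IsThreePhaseArr

lemma GolayArrTriad.sum_axisEval_mul_conj {r : ℕ} {s : Fin r → ℕ} {A B C : (Fin r → ℤ) → ℂ}
    (hT : GolayArrTriad r s A B C) (k : Fin r) {z : ℂ} (hz : ‖z‖ = 1) :
    axisEval s k z A * conj (axisEval s k z A) + axisEval s k z B * conj (axisEval s k z B) +
      axisEval s k z C * conj (axisEval s k z C) = 3 * ∏ m, s m := by
  obtain ⟨hA, hB, hC, hcorr⟩ := hT
  have hz0 : z ≠ 0 := norm_ne_zero_iff.1 (by rw [hz]; exact one_ne_zero)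
  have key := fun {X : (Fin r → ℤ) → ℂ} (hX : IsThreePhaseArr r s X) =>
    sum_sub_conj_mul_aperCorrArr (A := X) (χ := fun i => z ^ i k)
      (fun i hi => hX.eq_zero_of_notMem hi) (fun i u => zpow_add₀ hz0 _ _)
      (fun i => by rw [norm_zpow, hz, one_zpow])
  simp only [axisEval, ← key hA, ← key hB, ← key hC, ← sum_add_distrib, ← mul_add]
  rw [sum_eq_single 0 (fun u _ hu => by rw [hcorr u hu, mul_zero]), hA.aperCorrArr_zero,
    hB.aperCorrArr_zero, hC.aperCorrArr_zero]
  · simp only [Pi.zero_apply, zpow_zero, map_one]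
    ring
  · intro h0
    have hempty : arrBox s = ∅ := by
      by_contra hne
      obtain ⟨i, hi⟩ := nonempty_iff_ne_empty.2 hne
      exact h0 (mem_sub.2 ⟨i, hi, i, hi, sub_self i⟩)
    rw [hA.aperCorrArr_zero, hB.aperCorrArr_zero, hC.aperCorrArr_zero, ← card_arrBox, hempty,
      card_empty]
    simp

-- As a polynomial in `t` this is `2(a + b + c) t + (a² + b² + c²)`, and `a + b + c = 0` forces
-- `a² + b² + c² ∈ {0, 2}`.
lemma exists_add_sq_add_add_sq_add_add_sq_ne_one (a b c : ZMod 3) :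
    ∃ t : ZMod 3, (t + a) ^ 2 + (t + b) ^ 2 + (t + c) ^ 2 ≠ 1 := by
  revert a b c
  decide

/-- There is no 3-phase `s₁ × ⋯ × s_r` Golay array triad when
`∏ₖ s_k ≡ 4 (mod 6)`. -/
theorem no_golay_array_triad_of_four_mod_six (r : ℕ) (s : Fin r → ℕ)
    (hmod : (∏ k, s k) % 6 = 4) :
    ¬ ∃ A B C : (Fin r → ℤ) → ℂ, GolayArrTriad r s A B C := by
  rintro ⟨A, B, C, hT⟩
  obtain ⟨k, -, hk⟩ := Nat.prime_two.prime.exists_mem_finset_dvd (show 2 ∣ ∏ m, s m by omega)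
  replace hk : Even (s k) := even_iff_two_dvd.2 hk
  have hn : ((∏ m, s m : ℕ) : ZMod 3) = 1 := (ZMod.natCast_eq_natCast_iff' _ 1 3).2 (by omega)
  have hM : ((∑ i ∈ arrBox s, ((i k).negOnePow : ℤ) * i k : ℤ) : ZMod 3) = 1 := by
    have h := congrArg (Int.cast : ℤ → ZMod 3) (two_mul_sum_arrBox_negOnePow_mul_add_prod hk)
    generalize (∑ i ∈ arrBox s, ((i k).negOnePow : ℤ) * i k : ℤ) = M at h ⊢
    simp only [Int.cast_add, Int.cast_mul, Int.cast_ofNat, Int.cast_natCast, Int.cast_zero,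
      hn] at h
    grind
  obtain ⟨δA, hA⟩ := hT.1.exists_axisEval_mul_conj hk
  obtain ⟨δB, hB⟩ := hT.2.1.exists_axisEval_mul_conj hk
  obtain ⟨δC, hC⟩ := hT.2.2.1.exists_axisEval_mul_conj hk
  obtain ⟨t, ht⟩ := exists_add_sq_add_add_sq_add_add_sq_ne_one δA δB δC
  obtain ⟨j, rfl⟩ := ZMod.intCast_surjective t
  obtain ⟨NA, hNA, hNA3⟩ := hA j
  obtain ⟨NB, hNB, hNB3⟩ := hB j
  obtain ⟨NC, hNC, hNC3⟩ := hC j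
  have hN : NA + NB + NC = ∏ m, s m := by
    have h := hT.sum_axisEval_mul_conj k (z := -ω ^ j)
      (by rw [norm_neg, norm_zpow, norm_omega, one_zpow])
    rw [hNA, hNB, hNC] at h
    have h' : ((NA + NB + NC : ℤ) : ℂ) = ((∏ m, s m : ℕ) : ℂ) := by
      push_cast at h ⊢
      linear_combination h / 3
    exact_mod_cast h'
  apply ht
  rw [hM, mul_one] at hNA3 hNB3 hNC3
  rw [← hNA3, ← hNB3, ← hNC3, ← hn]
  exact_mod_cast congrArg (Int.cast : ℤ → ZMod 3) hN
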